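/- arXiv:2604.18077 — 4 statements merged into one kernel-verified Lean document; each statement's English description precedes it below -/
import Mathlib

section
/- For every integer L ≥ 2 and every real p with 0 < p ≤ 1, the expected value of Δ(Δ−1)/2 over a decision stage when an L-packet source is scheduled equals L(L−1)/(2p): ∑_{l=1}^{∞} (l(l−1)/2) · (p · p_l^{(L)} + (1−p) · 1{l = 1}) = L(L−1)/(2p). -/
/-!
For `l = n + L` the weight `C(l,2) · C(l-2, L-2)` equals `C(L,2) · C(n+L, L)`, so the second
factorial moment of the shifted negative binomial law is `C(L,2) p^L ∑ₙ C(n+L, L) (1-p)^n`,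
a negative-binomial series summing to `C(L,2) p^L / p^(L+1) = C(L,2) / p`. The atom at `l = 1`
contributes nothing since `Δ(Δ-1)` vanishes there.
-/

/-- Shifted negative-binomial pmf. -/
noncomputable def pnb (p : ℝ) (L l : ℕ) : ℝ :=
  if L ≤ l then ((l - 2).choose (L - 2) : ℝ) * p ^ (L - 1) * (1 - p) ^ (l - L) else 0

open Finset

lemma pnb_of_lt {p : ℝ} {L l : ℕ} (h : l < L) : pnb p L l = 0 :=
  if_neg (not_le.mpr h)

lemma cast_choose_two_mul_pnb_add (p : ℝ) {L : ℕ} (hL : 2 ≤ L) (n : ℕ) :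
    ((n + L : ℕ) : ℝ) * (((n + L : ℕ) : ℝ) - 1) / 2 * (p * pnb p L (n + L))
      = (L.choose 2 : ℝ) * p ^ L * ((n + L).choose L * (1 - p) ^ n) := by
  have hchoose : ((n + L).choose L : ℝ) * L.choose 2
      = (n + L).choose 2 * (n + L - 2).choose (L - 2) := by
    exact_mod_cast Nat.choose_mul hL
  have hpow : p * p ^ (L - 1) = p ^ L := by
    rw [← pow_succ']
    congr 1
    omega
  rw [pnb, if_pos (Nat.le_add_left L n), Nat.add_sub_cancel, ← Nat.cast_choose_two]
  linear_combination ((n + L - 2).choose (L - 2) * (n + L).choose 2 * (1 - p) ^ n : ℝ) * hpow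
    - (p ^ L * (1 - p) ^ n) * hchoose

theorem hasSum_choose_two_mul_pnb {p : ℝ} (hp : |1 - p| < 1) {L : ℕ} (hL : 2 ≤ L) :
    HasSum (fun l : ℕ => (l : ℝ) * ((l : ℝ) - 1) / 2 * (p * pnb p L l))
      ((L.choose 2 : ℝ) / p) := by
  have hp0 : p ≠ 0 := by
    rintro rfl
    simp at hp
  have hgeom := (hasSum_choose_mul_geometric_of_norm_lt_one (𝕜 := ℝ) L hp).mul_left
    ((L.choose 2 : ℝ) * p ^ L)
  have hsum : (L.choose 2 : ℝ) / p = (L.choose 2 : ℝ) * p ^ L * (1 / (1 - (1 - p)) ^ (L + 1)) := by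
    rw [sub_sub_cancel, pow_succ]
    field_simp
  rw [← hasSum_nat_add_iff' L, sum_eq_zero fun l hl => by rw [pnb_of_lt (mem_range.mp hl)]; ring,
    sub_zero, hsum]
  simpa only [cast_choose_two_mul_pnb_add p hL] using hgeom

/-- The expected value of `Δ(Δ-1)/2` over a decision stage when an `L`-packet
source is scheduled equals `L(L-1)/(2p)`, where the stage length `Δ` equals `l`
with probability `p · pnb p L l + (1-p)·1{l = 1}`. -/
theorem expected_stage_quadratic (p : ℝ) (hp0 : 0 < p) (hp1 : p ≤ 1) (L : ℕ) (hL : 2 ≤ L) :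
    ∑' l : ℕ, (l : ℝ) * ((l : ℝ) - 1) / 2 *
        (p * pnb p L l + (1 - p) * (if l = 1 then 1 else 0))
      = (L : ℝ) * ((L : ℝ) - 1) / (2 * p) := by
  have hsummand : (fun l : ℕ => (l : ℝ) * ((l : ℝ) - 1) / 2 *
      (p * pnb p L l + (1 - p) * (if l = 1 then 1 else 0)))
      = fun l : ℕ => (l : ℝ) * ((l : ℝ) - 1) / 2 * (p * pnb p L l) := by
    funext l
    rcases eq_or_ne l 1 with rfl | hl
    · simp
    · simp [hl]
  have hp : |1 - p| < 1 := abs_lt.mpr ⟨by linarith, by linarith⟩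
  rw [hsummand, (hasSum_choose_two_mul_pnb hp hL).tsum_eq, Nat.cast_choose_two]
  field_simp
end

section
/- Let 0 < p ≤ 1 and let L_m, L_j be integers with 2 ≤ L_m ≤ L_j. Then the shifted negative-binomial pmfs are ordered in likelihood ratio: for all natural numbers a ≤ b, p_a^{(L_j)} · p_b^{(L_m)} ≤ p_b^{(L_j)} · p_a^{(L_m)}. -/
lemma choose_step_aux (j k m : ℕ) (hjk : j ≤ k) :
    m.choose k * (m+1).choose j ≤ (m+1).choose k * m.choose j := by
  apply Nat.le_of_mul_le_mul_right _ (Nat.succ_pos m)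
  calc m.choose k * (m+1).choose j * (m+1)
      = (m+1).choose j * (m.choose k * (m+1)) := by ring
    _ = (m+1).choose j * ((m+1).choose k * (m+1-k)) := by rw [Nat.choose_mul_succ_eq]
    _ ≤ (m+1).choose j * ((m+1).choose k * (m+1-j)) :=
        Nat.mul_le_mul_left _ (Nat.mul_le_mul_left _ (by omega))
    _ = (m+1).choose k * ((m+1).choose j * (m+1-j)) := by ring
    _ = (m+1).choose k * (m.choose j * (m+1)) := by rw [Nat.choose_mul_succ_eq]
    _ = (m+1).choose k * m.choose j * (m+1) := by ring

lemma choose_cross (j k n m : ℕ) (hjk : j ≤ k) (hkn : k ≤ n) (hnm : n ≤ m) :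
    n.choose k * m.choose j ≤ m.choose k * n.choose j := by
  induction m, hnm using Nat.le_induction with
  | base => exact le_of_eq (by ring)
  | succ m hm ih =>
    have hCm : 0 < m.choose k := Nat.choose_pos (le_trans hkn hm)
    apply Nat.le_of_mul_le_mul_right _ hCm
    calc n.choose k * (m+1).choose j * m.choose k
        = n.choose k * (m.choose k * (m+1).choose j) := by ring
      _ ≤ n.choose k * ((m+1).choose k * m.choose j) :=
          Nat.mul_le_mul_left _ (choose_step_aux j k m hjk)
      _ = (m+1).choose k * (n.choose k * m.choose j) := by ring
      _ ≤ (m+1).choose k * (m.choose k * n.choose j) := Nat.mul_le_mul_left _ ih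
      _ = (m+1).choose k * n.choose j * m.choose k := by ring

lemma pnb_nonneg (p : ℝ) (hp : 0 ≤ p) (hq : 0 ≤ 1 - p) (L l : ℕ) : 0 ≤ pnb p L l := by
  unfold pnb
  split
  · exact mul_nonneg (mul_nonneg (by positivity) (pow_nonneg hp _)) (pow_nonneg hq _)
  · exact le_refl 0

/-- The shifted negative-binomial pmfs are ordered in the likelihood-ratio order
(denominator-free cross-product form): the stage-length distribution of the
longer update dominates that of the shorter one. -/
theorem pnb_likelihood_ratio_order (p : ℝ) (hp0 : 0 < p) (hp1 : p ≤ 1)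
    (Lm Lj : ℕ) (hLm : 2 ≤ Lm) (hml : Lm ≤ Lj) :
    ∀ a b : ℕ, a ≤ b → pnb p Lj a * pnb p Lm b ≤ pnb p Lj b * pnb p Lm a := by
  intro a b hab
  have hp : (0:ℝ) ≤ p := le_of_lt hp0
  have hq : (0:ℝ) ≤ 1 - p := by linarith
  by_cases ha : Lj ≤ a
  · have hb : Lj ≤ b := le_trans ha hab
    have hma : Lm ≤ a := le_trans hml ha
    have hmb : Lm ≤ b := le_trans hma hab
    simp only [pnb, if_pos ha, if_pos hb, if_pos hma, if_pos hmb]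
    have key := choose_cross (Lm-2) (Lj-2) (a-2) (b-2) (by omega) (by omega) (by omega)
    have keyR : ((a-2).choose (Lj-2) : ℝ) * ((b-2).choose (Lm-2) : ℝ) ≤
        ((b-2).choose (Lj-2) : ℝ) * ((a-2).choose (Lm-2) : ℝ) := by exact_mod_cast key
    have hexp : (a - Lj) + (b - Lm) = (b - Lj) + (a - Lm) := by omega
    have e1 : (1-p)^(a-Lj) * (1-p)^(b-Lm) = (1-p)^(b-Lj) * (1-p)^(a-Lm) := by
      rw [← pow_add, ← pow_add, hexp]
    have hK : (0:ℝ) ≤ p ^ (Lj-1) * p ^ (Lm-1) * ((1-p)^(a-Lj) * (1-p)^(b-Lm)) :=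
      mul_nonneg (mul_nonneg (pow_nonneg hp _) (pow_nonneg hp _))
        (mul_nonneg (pow_nonneg hq _) (pow_nonneg hq _))
    calc ((a-2).choose (Lj-2) : ℝ) * p ^ (Lj-1) * (1-p)^(a-Lj) *
          (((b-2).choose (Lm-2) : ℝ) * p ^ (Lm-1) * (1-p)^(b-Lm))
        = (((a-2).choose (Lj-2) : ℝ) * ((b-2).choose (Lm-2) : ℝ)) *
          (p ^ (Lj-1) * p ^ (Lm-1) * ((1-p)^(a-Lj) * (1-p)^(b-Lm))) := by ring
      _ ≤ (((b-2).choose (Lj-2) : ℝ) * ((a-2).choose (Lm-2) : ℝ)) *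
          (p ^ (Lj-1) * p ^ (Lm-1) * ((1-p)^(a-Lj) * (1-p)^(b-Lm))) :=
          mul_le_mul_of_nonneg_right keyR hK
      _ = ((b-2).choose (Lj-2) : ℝ) * p ^ (Lj-1) * (1-p)^(b-Lj) *
          (((a-2).choose (Lm-2) : ℝ) * p ^ (Lm-1) * (1-p)^(a-Lm)) := by
          rw [e1]; ring
  · have hza : pnb p Lj a = 0 := by simp [pnb, ha]
    rw [hza, zero_mul]
    exact mul_nonneg (pnb_nonneg p hp hq _ _) (pnb_nonneg p hp hq _ _)
end

section
/- Let 0 < p ≤ 1, let L ≥ 2 be an integer, let α ≥ 0 and λ ∈ ℝ, and set θ := λ + α·((L−1)/(2p) + L/p). Then the affine function h(x) := (α·L/p)·x − θ·L/p satisfies, for every v ∈ ℕ, the policy-evaluation (Bellman) equation of the always-schedule policy: h(v) = (α·v + λ − θ)·L + α·L(L−1)/(2p) + (1−p)·h(v+1) + p·∑_{l=L}^{∞} p_l^{(L)} · h(l). -/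
lemma tsum_pnb_affine (p : ℝ) (hp0 : 0 < p) (hp1 : p ≤ 1) (k : ℕ) (c d : ℝ) :
    ∑' l : ℕ, pnb p (k + 2) l * (c * (l : ℝ) - d)
      = c * ((k : ℝ) + 1) / p + c - d := by
  have hpne : p ≠ 0 := ne_of_gt hp0
  have hx : ‖1 - p‖ < 1 := by
    rw [Real.norm_eq_abs, abs_lt]; constructor <;> linarith
  set x := 1 - p with hxdef
  have hinj : Function.Injective (fun n : ℕ => n + (k + 2)) := fun a b h => by
    simpa using h
  have hreindex : ∑' l : ℕ, pnb p (k + 2) l * (c * (l : ℝ) - d)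
      = ∑' n : ℕ, pnb p (k + 2) (n + (k + 2)) * (c * ((n + (k + 2) : ℕ) : ℝ) - d) := by
    refine (hinj.tsum_eq ?_).symm
    intro l hl
    have hne := Function.mem_support.mp hl
    have hle : k + 2 ≤ l := by
      by_contra h
      exact hne (by simp [pnb, h])
    exact ⟨l - (k + 2), by simp; omega⟩
  rw [hreindex]
  have key : ∀ n : ℕ, pnb p (k + 2) (n + (k + 2)) * (c * ((n + (k + 2) : ℕ) : ℝ) - d)
      = p ^ (k + 1) * ((c * ((k : ℝ) + 1)) * ((((n + (k + 1)).choose (k + 1) : ℕ) : ℝ) * x ^ n)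
          + (c - d) * ((((n + k).choose k : ℕ) : ℝ) * x ^ n)) := by
    intro n
    have h1 : (k + 2 : ℕ) ≤ n + (k + 2) := by omega
    have h2 : n + (k + 2) - 2 = n + k := by omega
    have h3 : k + 2 - 2 = k := by omega
    have h4 : k + 2 - 1 = k + 1 := by omega
    have h5 : n + (k + 2) - (k + 2) = n := by omega
    have hid : (((n + k : ℕ) : ℝ) + 1) * (((n + k).choose k : ℕ) : ℝ)
        = (((n + k + 1).choose (k + 1) : ℕ) : ℝ) * ((k : ℝ) + 1) := by
      have h := Nat.add_one_mul_choose_eq (n + k) k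
      have h' : ((Nat.succ (n + k) * (n + k).choose k : ℕ) : ℝ)
          = (((n + k + 1).choose (k + 1) * (k + 1) : ℕ) : ℝ) := by rw [h]
      push_cast at h'
      push_cast
      linarith [h']
    simp only [pnb, if_pos h1, h2, h3, h4, h5]
    have hch : (n + (k + 1)) = (n + k + 1) := by omega
    rw [hch]
    push_cast
    push_cast at hid
    linear_combination (p ^ (k + 1) * x ^ n * c) * hid
  have hA := hasSum_choose_mul_geometric_of_norm_lt_one (k + 1) hx
  have hB := hasSum_choose_mul_geometric_of_norm_lt_one k hx
  have total := ((hA.mul_left (c * ((k : ℝ) + 1))).add (hB.mul_left (c - d))).mul_left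
    (p ^ (k + 1))
  have htsum := total.tsum_eq
  calc ∑' n : ℕ, pnb p (k + 2) (n + (k + 2)) * (c * ((n + (k + 2) : ℕ) : ℝ) - d)
      = p ^ (k + 1) * (c * ((k : ℝ) + 1) * (1 / (1 - x) ^ (k + 1 + 1))
          + (c - d) * (1 / (1 - x) ^ (k + 1))) := by
        rw [← htsum]; exact tsum_congr key
    _ = c * ((k : ℝ) + 1) / p + c - d := by
        have : (1 : ℝ) - x = p := by rw [hxdef]; ring
        rw [this]
        field_simp
        ring

/-- The affine function `h(x) = (αL/p)·x − θL/p`, with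
`θ = λ + α((L−1)/(2p) + L/p)`, is the bias function of the always-schedule
policy: it satisfies the policy-evaluation Bellman equation at every state. -/
theorem affine_bias_always_schedule (p : ℝ) (hp0 : 0 < p) (hp1 : p ≤ 1)
    (L : ℕ) (hL : 2 ≤ L) (α lam : ℝ) (hα : 0 ≤ α) (v : ℕ) :
    (fun x : ℕ => α * (L : ℝ) / p * (x : ℝ)
        - (lam + α * (((L : ℝ) - 1) / (2 * p) + (L : ℝ) / p)) * (L : ℝ) / p) v
      = (α * (v : ℝ) + lam
            - (lam + α * (((L : ℝ) - 1) / (2 * p) + (L : ℝ) / p))) * (L : ℝ)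
        + α * (L : ℝ) * ((L : ℝ) - 1) / (2 * p)
        + (1 - p) * (fun x : ℕ => α * (L : ℝ) / p * (x : ℝ)
            - (lam + α * (((L : ℝ) - 1) / (2 * p) + (L : ℝ) / p)) * (L : ℝ) / p) (v + 1)
        + p * ∑' l : ℕ, pnb p L l *
            (fun x : ℕ => α * (L : ℝ) / p * (x : ℝ)
              - (lam + α * (((L : ℝ) - 1) / (2 * p) + (L : ℝ) / p)) * (L : ℝ) / p) l := by
  obtain ⟨k, rfl⟩ : ∃ k, L = k + 2 := ⟨L - 2, by omega⟩
  have hpne : p ≠ 0 := ne_of_gt hp0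
  simp only []
  rw [tsum_pnb_affine p hp0 hp1 k
    (α * ((k + 2 : ℕ) : ℝ) / p)
    ((lam + α * ((((k + 2 : ℕ) : ℝ) - 1) / (2 * p) + ((k + 2 : ℕ) : ℝ) / p)) * ((k + 2 : ℕ) : ℝ) / p)]
  push_cast
  field_simp
  ring
end

section
/- Let 0 < p ≤ 1, let L_i, L_m ≥ 2 be integers, let α > 0 and λ ∈ ℝ, set θ := λ + α·((L_i−1)/(2p) + L_i/p) and h(x) := (α·L_i/p)·x − θ·L_i/p. For v ∈ ℕ define C_i(v) := (α·v + λ − θ)·L_i + α·L_i(L_i−1)/(2p) + (1−p)·h(v+1) + p·∑_{l} p_l^{(L_i)} h(l) and C_m(v) := (α·v − θ)·L_m + α·L_m(L_m−1)/(2p) + (1−p)·h(v+1) + p·∑_{l} p_l^{(L_m)} h(v+l). Then C_i(v) − C_m(v) = L_m·(λ − α·v + α(L_i−L_m)/(2p)), and consequently C_i(v) ≤ C_m(v) if and only if v ≥ θ/α − (L_m−1)/(2p) − L_i/p. -/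
lemma hasSum_pnb (p : ℝ) (hp0 : 0 < p) (hp1 : p ≤ 1) (L : ℕ) (hL : 2 ≤ L) :
    HasSum (pnb p L) 1 := by
  have hr : ‖(1 - p)‖ < 1 := by rw [Real.norm_eq_abs, abs_lt]; constructor <;> linarith
  have h1 : HasSum (fun n : ℕ ↦ pnb p L (n + L)) 1 := by
    have h0 := (hasSum_choose_mul_geometric_of_norm_lt_one (L - 2) hr).mul_left (p ^ (L - 1))
    have hpe : p ^ (L - 1) * (1 / (1 - (1 - p)) ^ (L - 2 + 1)) = 1 := by
      have hps : 1 - (1 - p) = p := by ring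
      have hkk : L - 2 + 1 = L - 1 := by omega
      rw [hps, hkk]
      field_simp
    rw [hpe] at h0
    have heq : ∀ n : ℕ, p ^ (L - 1) * (((n + (L - 2)).choose (L - 2) : ℝ) * (1 - p) ^ n)
        = pnb p L (n + L) := by
      intro n
      have hle : L ≤ n + L := by omega
      have h2 : n + L - 2 = n + (L - 2) := by omega
      have h3 : n + L - L = n := by omega
      simp only [pnb, if_pos hle, h2, h3]
      ring
    exact funext heq ▸ h0
  have h2 := (hasSum_nat_add_iff (f := pnb p L) L).1 h1
  have hz : ∑ i ∈ Finset.range L, pnb p L i = 0 := by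
    apply Finset.sum_eq_zero
    intro i hi
    simp only [Finset.mem_range] at hi
    simp [pnb, Nat.not_le.2 hi]
  rwa [hz, add_zero] at h2

lemma hasSum_pnb_mul (p : ℝ) (hp0 : 0 < p) (hp1 : p ≤ 1) (L : ℕ) (hL : 2 ≤ L) :
    HasSum (fun l : ℕ ↦ pnb p L l * l) (1 + ((L : ℝ) - 1) / p) := by
  have hr : ‖(1 - p)‖ < 1 := by rw [Real.norm_eq_abs, abs_lt]; constructor <;> linarith
  set k := L - 2 with hk
  have hA : HasSum (fun n : ℕ ↦ ((n + k).choose (k + 1) : ℝ) * (1 - p) ^ n)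
      ((1 - p) * (1 / (1 - (1 - p)) ^ (k + 2))) := by
    have h0 := (hasSum_choose_mul_geometric_of_norm_lt_one (k + 1) hr).mul_left (1 - p)
    have h1 : HasSum (fun n : ℕ ↦ ((n + 1 + k).choose (k + 1) : ℝ) * (1 - p) ^ (n + 1))
        ((1 - p) * (1 / (1 - (1 - p)) ^ (k + 2))) := by
      have heq : ∀ n : ℕ, (1 - p) * (((n + (k + 1)).choose (k + 1) : ℝ) * (1 - p) ^ n)
          = ((n + 1 + k).choose (k + 1) : ℝ) * (1 - p) ^ (n + 1) := by
        intro n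
        have : n + (k + 1) = n + 1 + k := by omega
        rw [this]; ring
      have : k + 1 + 1 = k + 2 := rfl
      rw [this] at h0
      exact funext heq ▸ h0
    have h2 := (hasSum_nat_add_iff
        (f := fun n : ℕ ↦ ((n + k).choose (k + 1) : ℝ) * (1 - p) ^ n) 1).1 h1
    simpa [Nat.choose_eq_zero_of_lt (by omega : k < k + 1)] using h2
  have hmain : HasSum (fun n : ℕ ↦ pnb p L (n + L) * ((n : ℝ) + L))
      (1 + ((L : ℝ) - 1) / p) := by
    have hS0 := hasSum_choose_mul_geometric_of_norm_lt_one (𝕜 := ℝ) k hr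
    have hcomb := ((hA.mul_left ((k : ℝ) + 1)).add (hS0.mul_left (L : ℝ))).mul_left (p ^ (L - 1))
    have heq : ∀ n : ℕ, p ^ (L - 1) * (((k : ℝ) + 1) * (((n + k).choose (k + 1) : ℝ) * (1 - p) ^ n)
        + (L : ℝ) * (((n + k).choose k : ℝ) * (1 - p) ^ n))
        = pnb p L (n + L) * ((n : ℝ) + L) := by
      intro n
      have hle : L ≤ n + L := by omega
      have h2 : n + L - 2 = n + k := by omega
      have h3 : n + L - L = n := by omega
      have hc : ((n + k).choose (k + 1) : ℝ) * ((k : ℝ) + 1)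
          = ((n + k).choose k : ℝ) * n := by
        have hnat := Nat.choose_succ_right_eq (n + k) k
        have h4 : n + k - k = n := by omega
        rw [h4] at hnat
        exact_mod_cast congrArg (Nat.cast (R := ℝ)) hnat
      simp only [pnb, if_pos hle, h2, h3, ← hk]
      linear_combination p ^ (L - 1) * (1 - p) ^ n * hc
    have hval : p ^ (L - 1) * (((k : ℝ) + 1) * ((1 - p) * (1 / (1 - (1 - p)) ^ (k + 2)))
        + (L : ℝ) * (1 / (1 - (1 - p)) ^ (k + 1)))
        = 1 + ((L : ℝ) - 1) / p := by
      have hps : 1 - (1 - p) = p := by ring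
      rw [hps]
      have hk1 : ((k : ℝ) + 1) = (L : ℝ) - 1 := by
        have : (k : ℝ) = (L : ℝ) - 2 := by
          rw [hk]; push_cast [Nat.cast_sub hL]; ring
        rw [this]; ring
      have hL1 : L - 1 = k + 1 := by omega
      rw [hk1, hL1]
      have hpne : p ≠ 0 := ne_of_gt hp0
      field_simp
      ring
    rw [← hval]
    exact funext heq ▸ hcomb
  have h2 := (hasSum_nat_add_iff (f := fun l : ℕ ↦ pnb p L l * l) L).1
    (by
      have heq : ∀ n : ℕ, pnb p L (n + L) * ((n : ℝ) + L)
          = pnb p L (n + L) * ((n + L : ℕ) : ℝ) := by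
        intro n; push_cast; ring
      exact funext heq ▸ hmain)
  have hz : ∑ i ∈ Finset.range L, pnb p L i * i = 0 := by
    apply Finset.sum_eq_zero
    intro i hi
    simp only [Finset.mem_range] at hi
    simp [pnb, Nat.not_le.2 hi]
  rwa [hz, add_zero] at h2

/-- Average cost of the always-schedule policy for a source with update
length `L`, weight `α` and penalty `lam`. -/
noncomputable def thetaA (p : ℝ) (L : ℕ) (α lam : ℝ) : ℝ :=
  lam + α * (((L : ℝ) - 1) / (2 * p) + (L : ℝ) / p)

/-- Bias function of the always-schedule policy. -/
noncomputable def biasA (p : ℝ) (L : ℕ) (α lam : ℝ) (x : ℕ) : ℝ :=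
  α * (L : ℝ) / p * (x : ℝ) - thetaA p L α lam * (L : ℝ) / p

/-- Cost-to-go at age `v` of scheduling the tagged source `i` and then always
scheduling `i`. -/
noncomputable def costI (p : ℝ) (Li : ℕ) (α lam : ℝ) (v : ℕ) : ℝ :=
  (α * (v : ℝ) + lam - thetaA p Li α lam) * (Li : ℝ)
    + α * (Li : ℝ) * ((Li : ℝ) - 1) / (2 * p)
    + (1 - p) * biasA p Li α lam (v + 1)
    + p * ∑' l : ℕ, pnb p Li l * biasA p Li α lam l

/-- Cost-to-go at age `v` of a one-step deviation that schedules the competing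
source of length `Lm` for one stage and then always schedules `i`. -/
noncomputable def costM (p : ℝ) (Li Lm : ℕ) (α lam : ℝ) (v : ℕ) : ℝ :=
  (α * (v : ℝ) - thetaA p Li α lam) * (Lm : ℝ)
    + α * (Lm : ℝ) * ((Lm : ℝ) - 1) / (2 * p)
    + (1 - p) * biasA p Li α lam (v + 1)
    + p * ∑' l : ℕ, pnb p Lm l * biasA p Li α lam (v + l)

/-- One-step-lookahead comparison establishing the threshold structure:
`C_i(v) − C_m(v) = Lm·(λ − α·v + α(L_i − L_m)/(2p))`, and consequently
`C_i(v) ≤ C_m(v)` iff `v ≥ θ/α − (L_m−1)/(2p) − L_i/p`. -/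
theorem one_step_lookahead_threshold (p : ℝ) (hp0 : 0 < p) (hp1 : p ≤ 1)
    (Li Lm : ℕ) (hLi : 2 ≤ Li) (hLm : 2 ≤ Lm) (α lam : ℝ) (hα : 0 < α) (v : ℕ) :
    costI p Li α lam v - costM p Li Lm α lam v
        = (Lm : ℝ) * (lam - α * (v : ℝ) + α * ((Li : ℝ) - (Lm : ℝ)) / (2 * p))
      ∧ (costI p Li α lam v ≤ costM p Li Lm α lam v ↔
          (v : ℝ) ≥ thetaA p Li α lam / α - ((Lm : ℝ) - 1) / (2 * p) - (Li : ℝ) / p) := by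
  have hpne : p ≠ 0 := ne_of_gt hp0
  have hαne : α ≠ 0 := ne_of_gt hα
  set θ := thetaA p Li α lam with hθ
  have T1 : ∑' l : ℕ, pnb p Li l * biasA p Li α lam l
      = α * (Li : ℝ) / p * (1 + ((Li : ℝ) - 1) / p) - θ * (Li : ℝ) / p := by
    refine HasSum.tsum_eq ?_
    have h := ((hasSum_pnb_mul p hp0 hp1 Li hLi).mul_left (α * (Li : ℝ) / p)).sub
      ((hasSum_pnb p hp0 hp1 Li hLi).mul_left (θ * (Li : ℝ) / p))
    rw [mul_one] at h
    have heq : ∀ l : ℕ, α * (Li : ℝ) / p * (pnb p Li l * l) - θ * (Li : ℝ) / p * pnb p Li l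
        = pnb p Li l * biasA p Li α lam l := by
      intro l; rw [biasA, ← hθ]; ring
    exact funext heq ▸ h
  have T2 : ∑' l : ℕ, pnb p Lm l * biasA p Li α lam (v + l)
      = α * (Li : ℝ) / p * ((v : ℝ) + 1 + ((Lm : ℝ) - 1) / p) - θ * (Li : ℝ) / p := by
    refine HasSum.tsum_eq ?_
    have h := ((hasSum_pnb_mul p hp0 hp1 Lm hLm).mul_left (α * (Li : ℝ) / p)).add
      ((hasSum_pnb p hp0 hp1 Lm hLm).mul_left
        (α * (Li : ℝ) / p * (v : ℝ) - θ * (Li : ℝ) / p))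
    rw [mul_one] at h
    have heq : ∀ l : ℕ, α * (Li : ℝ) / p * (pnb p Lm l * l)
        + (α * (Li : ℝ) / p * (v : ℝ) - θ * (Li : ℝ) / p) * pnb p Lm l
        = pnb p Lm l * biasA p Li α lam (v + l) := by
      intro l
      rw [biasA, ← hθ]
      push_cast
      ring
    have hval : α * (Li : ℝ) / p * (1 + ((Lm : ℝ) - 1) / p)
        + (α * (Li : ℝ) / p * (v : ℝ) - θ * (Li : ℝ) / p)
        = α * (Li : ℝ) / p * ((v : ℝ) + 1 + ((Lm : ℝ) - 1) / p) - θ * (Li : ℝ) / p := by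
      ring
    exact hval ▸ funext heq ▸ h
  have h1 : costI p Li α lam v - costM p Li Lm α lam v
      = (Lm : ℝ) * (lam - α * (v : ℝ) + α * ((Li : ℝ) - (Lm : ℝ)) / (2 * p)) := by
    rw [costI, costM, ← hθ, T1, T2, hθ, thetaA]
    field_simp
    ring
  refine ⟨h1, ?_⟩
  have hR : (Lm : ℝ) * (lam - α * (v : ℝ) + α * ((Li : ℝ) - (Lm : ℝ)) / (2 * p))
      = ((Lm : ℝ) * α) * ((θ / α - ((Lm : ℝ) - 1) / (2 * p) - (Li : ℝ) / p) - (v : ℝ)) := by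
    rw [hθ, thetaA]
    field_simp
    ring
  have hLmpos : (0 : ℝ) < (Lm : ℝ) := by exact_mod_cast Nat.lt_of_lt_of_le Nat.zero_lt_two hLm
  have hpos : 0 < (Lm : ℝ) * α := mul_pos hLmpos hα
  rw [← sub_nonpos, h1, hR]
  constructor <;> intro h <;> nlinarith [hpos]
end
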